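/- Let α = [0;2,\overline{r}] with r ≥ 1 and let σ be the standard morphism σ(a) = s₁, σ(b) = s₁^{r−1}s₀. Then σ^{m+1}(b) = s_{m+1}^{r−1} sₘ for all m ∈ ℕ, and consequently the adjoining singular words satisfy, for every m ≥ −1: vₘ = a·σ^{m+1}(b)·b⁻¹ if m is odd, and vₘ = b·σ^{m+1}(b)·a⁻¹ if m is even. -/

import Mathlib

/-!
σ shifts the standard sequence: σ(sₙ) = sₙ₊₁ for n ≥ 0. For n = 0, 1 this is the definition
of σ (using r ≥ 1 to write s₁^r = s₁ · s₁^{r-1}); beyond that it follows from the recursion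
sₙ₊₁ = sₙ^r sₙ₋₁, since σ is a morphism. Hence σ^{m+1}(b) = σ^m(s₁^{r-1} s₀) = s_{m+1}^{r-1} sₘ,
and the formula for vₘ is its definition with this substituted.
-/

/-- The two-letter alphabet 𝒜 = {a, b}. -/
inductive AB : Type
  | a : AB
  | b : AB
deriving DecidableEq, Repr

/-- Apply a morphism (determined by its images on the letters) to a finite word. -/
def applyM (g : AB → List AB) (w : List AB) : List AB := w.flatMap g

/-- The exchange morphism E : a ↦ b, b ↦ a. -/
def Em : AB → List AB
  | AB.a => [AB.b]
  | AB.b => [AB.a]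

/-- The morphism φ : a ↦ ab, b ↦ a. -/
def phim : AB → List AB
  | AB.a => [AB.a, AB.b]
  | AB.b => [AB.a]

/-- Composition of morphisms: `compM g h` applies `h` first, then `g`. -/
def compM (g h : AB → List AB) : AB → List AB := fun c => applyM g (h c)

/-- Powers of a morphism. -/
def mpow (g : AB → List AB) : ℕ → AB → List AB
  | 0 => fun c => [c]
  | n + 1 => compM g (mpow g n)

/-- A morphism is standard iff it is a composition of E and φ (in any number and order). -/
inductive IsStandard : (AB → List AB) → Prop
  | id : IsStandard (fun c => [c])
  | compE {ψ : AB → List AB} : IsStandard ψ → IsStandard (compM ψ Em)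
  | compPhi {ψ : AB → List AB} : IsStandard ψ → IsStandard (compM ψ phim)

/-- `IsRightConj ψ ξ k` : ξ is the k-th right conjugate of ψ, i.e. there is a word u
of length k with ψ(w)u = uξ(w) for all finite words w. -/
def IsRightConj (ψ ξ : AB → List AB) (k : ℕ) : Prop :=
  ∃ u : List AB, u.length = k ∧ ∀ w : List AB, applyM ψ w ++ u = u ++ applyM ξ w

/-- w^k (power of a finite word under concatenation). -/
def lpow (w : List AB) : ℕ → List AB
  | 0 => []
  | k + 1 => w ++ lpow w k

/-- Standard sequence associated with a directive sequence (d₁, d₂, …) (here `d`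
is indexed so that `d i` is dᵢ for i ≥ 1): `sseq d 0 = s₋₁ = b`, `sseq d (n+1) = sₙ`,
with s₀ = a and sₙ = sₙ₋₁^{dₙ} sₙ₋₂. -/
def sseq (d : ℕ → ℕ) : ℕ → List AB
  | 0 => [AB.b]
  | 1 => [AB.a]
  | n + 2 => lpow (sseq d (n + 1)) (d (n + 1)) ++ sseq d n

/-- Convergent denominators: `qseq d n` = qₙ = |sₙ| (q₀ = 1, q₁ = 1 + d₁,
qₙ = dₙqₙ₋₁ + qₙ₋₂). -/
def qseq (d : ℕ → ℕ) : ℕ → ℕ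
  | 0 => 1
  | 1 => 1 + d 1
  | n + 2 => d (n + 2) * qseq d (n + 1) + qseq d n

/-- `PrefInf u x` : the finite word u is a prefix of the infinite word x. -/
def PrefInf (u : List AB) (x : ℕ → AB) : Prop :=
  ∀ i, i < u.length → u.getD i AB.a = x i

/-- Image of an infinite word under a (non-erasing) morphism, letter by letter. -/
def applyInf (g : AB → List AB) (x : ℕ → AB) : ℕ → AB :=
  fun i => (applyM g ((List.range (i + 1)).map x)).getD i AB.a

/-- `IsProdInf u x` : the infinite word x is the infinite product u 0 · u 1 · u 2 ⋯,
i.e. every finite partial product is a prefix of x. -/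
def IsProdInf (u : ℕ → List AB) (x : ℕ → AB) : Prop :=
  ∀ n, PrefInf (((List.range n).map u).flatten) x

/-- Adjoining singular words: `vword d k` is the adjoining singular word v_{k-1}
(so `vword d 0 = v₋₁`), where vₙ = a·sₙ₊₁^{d_{n+2}−1}sₙ·b⁻¹ for n odd and
vₙ = b·sₙ₊₁^{d_{n+2}−1}sₙ·a⁻¹ for n even. -/
def vword (d : ℕ → ℕ) (k : ℕ) : List AB :=
  (if k % 2 = 0 then AB.a else AB.b) ::
    (lpow (sseq d (k + 1)) (d (k + 1) - 1) ++ sseq d k).dropLast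

/-- Singular words: `wword d k` is the singular word w_{k-2}
(w₋₂ = ε, w₋₁ = a, w₀ = b, and wₙ = a·sₙ·b⁻¹ for n ≥ 1 odd, wₙ = b·sₙ·a⁻¹ for n even). -/
def wword (d : ℕ → ℕ) : ℕ → List AB
  | 0 => []
  | 1 => [AB.a]
  | 2 => [AB.b]
  | k + 3 =>
      (if (k + 1) % 2 = 1 then AB.a else AB.b) :: (sseq d (k + 2)).dropLast

/-- The standard morphism σ associated with a type (i) Sturm number
α = [0;1+d₁,\overline{d₂,…,dₙ}] : σ(a) = sₙ₋₁, σ(b) = sₙ₋₁^{dₙ−d₁} sₙ₋₂. -/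
def sigmaGen (d : ℕ → ℕ) (n : ℕ) : AB → List AB
  | AB.a => sseq d n
  | AB.b => lpow (sseq d n) (d n - d 1) ++ sseq d (n - 1)

/-- The directive sequence of α = [0;2,\overline{r}] : d₁ = 1, dᵢ = r for i ≥ 2. -/
def dseq (r : ℕ) : ℕ → ℕ := fun i => if i ≤ 1 then 1 else r

/-- The directive sequence of 1 − α = [0;1,d₁,\overline{d₂,…,dₙ}] obtained from that of
α = [0;1+d₁,\overline{d₂,…,dₙ}] : ê₁ = 0 and êᵢ = dᵢ₋₁ for i ≥ 2. -/
def dhat (d : ℕ → ℕ) : ℕ → ℕ := fun i => if i ≤ 1 then 0 else d (i - 1)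

/-- `Generates ψ c x` : ψ is prolongable on the letter c and x = ψ^ω(c), i.e. every
ψ^m(c) is a prefix of x. -/
def Generates (ψ : AB → List AB) (c : AB) (x : ℕ → AB) : Prop :=
  (∃ w : List AB, w ≠ [] ∧ ψ c = c :: w) ∧ ∀ m, PrefInf (mpow ψ m c) x

/-- Fibonacci numbers, shifted: `fibw k = F_{k-1}`, so fibw 0 = F₋₁ = 1,
fibw 1 = F₀ = 1, Fₙ = Fₙ₋₁ + Fₙ₋₂. -/
def fibw : ℕ → ℕ
  | 0 => 1
  | 1 => 1
  | n + 2 => fibw (n + 1) + fibw n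

/-- `HasCF γ a` : γ has continued fraction expansion [0; a 1, a 2, a 3, …]. -/
def HasCF (γ : ℝ) (a : ℕ → ℕ) : Prop :=
  ∃ x : ℕ → ℝ, x 0 = γ ∧ (∀ i, 0 < x i ∧ x i < 1) ∧
    ∀ i, 1 / x i = (a (i + 1) : ℝ) + x (i + 1)

/-- γ has a continued fraction expansion of type (i):
γ = [0;1+d₁,\overline{d₂,…,dₙ}] < 1/2 with dₙ ≥ d₁ ≥ 1. -/
def CFTypeI (γ : ℝ) : Prop :=
  ∃ a : ℕ → ℕ, HasCF γ a ∧ γ < 1 / 2 ∧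
    ∃ n : ℕ, 2 ≤ n ∧ ∃ d : ℕ → ℕ,
      (∀ i, 1 ≤ i → 1 ≤ d i) ∧ a 1 = 1 + d 1 ∧ (∀ i, 2 ≤ i → a i = d i) ∧
      (∀ i, 2 ≤ i → d (i + (n - 1)) = d i) ∧ d 1 ≤ d n

/-- γ has a continued fraction expansion of type (ii):
γ = [0;1,d₁,\overline{d₂,…,dₙ}] > 1/2 with dₙ ≥ d₁. -/
def CFTypeII (γ : ℝ) : Prop :=
  ∃ a : ℕ → ℕ, HasCF γ a ∧ 1 / 2 < γ ∧
    ∃ n : ℕ, 2 ≤ n ∧ ∃ d : ℕ → ℕ,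
      (∀ i, 1 ≤ i → 1 ≤ d i) ∧ a 1 = 1 ∧ (∀ i, 2 ≤ i → a i = d (i - 1)) ∧
      (∀ i, 2 ≤ i → d (i + (n - 1)) = d i) ∧ d 1 ≤ d n

/-- A Sturm number: an irrational γ ∈ (0,1) whose continued fraction expansion is of
type (i) or type (ii). -/
def IsSturmNumber (γ : ℝ) : Prop :=
  Irrational γ ∧ 0 < γ ∧ γ < 1 ∧ (CFTypeI γ ∨ CFTypeII γ)

section Morphism

variable (g : AB → List AB)

theorem applyM_append (u v : List AB) :
    applyM g (u ++ v) = applyM g u ++ applyM g v :=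
  List.flatMap_append

theorem applyM_lpow (w : List AB) (k : ℕ) : applyM g (lpow w k) = lpow (applyM g w) k := by
  induction k with
  | zero => rfl
  | succ k ih => rw [lpow, applyM_append, ih, lpow]

theorem mpow_succ_apply (n : ℕ) (c : AB) : mpow g (n + 1) c = applyM g (mpow g n c) := rfl

end Morphism

theorem lpow_eq_append_lpow_sub_one (w : List AB) {k : ℕ} (hk : 1 ≤ k) :
    lpow w k = w ++ lpow w (k - 1) := by
  obtain ⟨j, rfl⟩ := Nat.exists_eq_add_of_le' hk
  rfl

theorem dseq_of_two_le (r : ℕ) {i : ℕ} (hi : 2 ≤ i) : dseq r i = r :=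
  if_neg (by omega)

theorem sseq_dseq_add_three (r n : ℕ) :
    sseq (dseq r) (n + 3) = lpow (sseq (dseq r) (n + 2)) r ++ sseq (dseq r) (n + 1) := by
  rw [sseq, dseq_of_two_le r (by omega)]

theorem sigmaGen_dseq_b (r : ℕ) :
    sigmaGen (dseq r) 2 AB.b = lpow (sseq (dseq r) 2) (r - 1) ++ sseq (dseq r) 1 := by
  rw [sigmaGen, dseq_of_two_le r le_rfl]
  rfl

theorem applyM_sigmaGen_sseq (r : ℕ) (hr : 1 ≤ r) (n : ℕ) :
    applyM (sigmaGen (dseq r) 2) (sseq (dseq r) (n + 1)) = sseq (dseq r) (n + 2) := by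
  induction n using Nat.twoStepInduction with
  | zero => simp [applyM, sseq, sigmaGen]
  | one =>
    calc applyM (sigmaGen (dseq r) 2) (sseq (dseq r) 2)
        = sigmaGen (dseq r) 2 AB.a ++ sigmaGen (dseq r) 2 AB.b := by
          simp [sseq, dseq, lpow, applyM]
      _ = sseq (dseq r) 2 ++ (lpow (sseq (dseq r) 2) (r - 1) ++ sseq (dseq r) 1) := by
        rw [sigmaGen_dseq_b]; rfl
      _ = sseq (dseq r) 3 := by
        rw [sseq_dseq_add_three, lpow_eq_append_lpow_sub_one _ hr, List.append_assoc]
  | more n ih₁ ih₂ =>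
    rw [sseq_dseq_add_three, sseq_dseq_add_three, applyM_append, applyM_lpow, ih₁, ih₂]

-- At `k = 0` this is `b = s₀^{d₁ - 1} s₋₁` because `d₁ = 1`, so it covers `v₋₁` as well.
theorem mpow_sigmaGen_b (r : ℕ) (hr : 1 ≤ r) (k : ℕ) :
    mpow (sigmaGen (dseq r) 2) k AB.b =
      lpow (sseq (dseq r) (k + 1)) (dseq r (k + 1) - 1) ++ sseq (dseq r) k := by
  cases k with
  | zero => rfl
  | succ m =>
    rw [dseq_of_two_le r (by omega)]
    induction m with
    | zero => simpa [mpow, compM, applyM] using sigmaGen_dseq_b r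
    | succ m ih =>
      rw [mpow_succ_apply, ih, applyM_append, applyM_lpow, applyM_sigmaGen_sseq r hr,
        applyM_sigmaGen_sseq r hr]

/-- For α = [0;2,\overline{r}] (r ≥ 1) and σ(a) = s₁, σ(b) = s₁^{r−1}s₀:
σ^{m+1}(b) = s_{m+1}^{r−1} sₘ for all m ∈ ℕ, and consequently for every m ≥ −1,
vₘ = a·σ^{m+1}(b)·b⁻¹ if m is odd and vₘ = b·σ^{m+1}(b)·a⁻¹ if m is even.
(Here `vword (dseq r) k` is v_{k−1}, so the second claim is stated for k = m + 1 ≥ 0,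
with m odd iff k even.) -/
theorem statement12 (r : ℕ) (hr : 1 ≤ r) :
    (∀ m : ℕ, mpow (sigmaGen (dseq r) 2) (m + 1) AB.b =
        lpow (sseq (dseq r) (m + 2)) (r - 1) ++ sseq (dseq r) (m + 1)) ∧
    (∀ k : ℕ, vword (dseq r) k =
        (if k % 2 = 0 then AB.a else AB.b) ::
          (mpow (sigmaGen (dseq r) 2) k AB.b).dropLast) := by
  refine ⟨fun m => ?_, fun k => ?_⟩
  · rw [mpow_sigmaGen_b r hr, dseq_of_two_le r (by omega)]
  · rw [vword, mpow_sigmaGen_b r hr]
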